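/- Let T be an inverse semigroup, A a T-module, and c ∈ Z³_≤(T¹, A¹) a strongly normalized 3-cocycle. Define ξ_t : F(T ⊔ T⁻¹) → A recursively by ξ_t([x]) = θ(r(tx)); ξ_t([x]⁻¹u) = c(t, x⁻¹, x)⁻¹ ξ_t([x⁻¹]u); ξ_t([x][y]v) = c(t,x,y) ξ_t([xy]v); ξ_t([x][y]⁻¹v) = c(t, x y⁻¹, y)⁻¹ ξ_t([x y⁻¹]v). Then ξ_t(w) ∈ A_{θ(r(t·φ(w)))} for every word w, where φ is the evaluation homomorphism and r(s) = s s⁻¹. -/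

import Mathlib

/-- An inverse semigroup: every element `s` has a (unique) inverse `s⁻¹`
with `s * s⁻¹ * s = s` and `s⁻¹ * s * s⁻¹ = s⁻¹`. -/
class InverseSemigroup (S : Type*) extends Semigroup S, Inv S where
  mul_inv_mul : ∀ s : S, s * s⁻¹ * s = s
  inv_mul_inv : ∀ s : S, s⁻¹ * s * s⁻¹ = s⁻¹
  inv_unique : ∀ s t : S, s * t * s = s → t * s * t = t → t = s⁻¹

namespace InverseSemigroup

/-- The set of idempotents of a multiplicative structure. -/
def E (S : Type*) [Mul S] : Set S := {e | e * e = e}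

/-- The natural partial order: `s ≤ t` iff `s = s * s⁻¹ * t`. -/
def nle {S : Type*} [Mul S] [Inv S] (s t : S) : Prop := s = s * s⁻¹ * t

/-- `r s = s * s⁻¹`. -/
def r {S : Type*} [Mul S] [Inv S] (s : S) : S := s * s⁻¹

/-- A Clifford semigroup (semilattice of groups): idempotents are central. -/
def IsClifford (S : Type*) [Mul S] : Prop := ∀ e ∈ E S, ∀ s : S, e * s = s * e

end InverseSemigroup

open InverseSemigroup

/-- The value in `T` of the letter `(x, true) = [x]` or `(x, false) = [x]⁻¹`. -/
def letterVal {T : Type*} [InverseSemigroup T] (p : T × Bool) : T :=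
  if p.2 then p.1 else p.1⁻¹

/-- The evaluation `φ` in `T` of a nonempty word `p :: l` over `T ⊔ T⁻¹`. -/
def wordVal {T : Type*} [InverseSemigroup T] (p : T × Bool) (l : List (T × Bool)) : T :=
  l.foldl (fun acc q => acc * letterVal q) (letterVal p)

/-!
Every defining equation of `ξ_t` writes `ξ_t(w) = a · ξ_t(w')` with `φ(w') = φ(w)` and `a` a
cocycle value or its inverse, lying in the component `A_{θ(r(t u))}` where `r(u)` is a left
identity for `φ(w')`. Since `A` is commutative, `r(a b) = r(a) r(b)`, and `r(u) φ(w') = φ(w')`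
forces `r(t u) ≥ r(t φ(w'))`; so the component is preserved and induction on the word applies.
-/

namespace InverseSemigroup

variable {S : Type*} [InverseSemigroup S]

protected theorem inv_inv (s : S) : s⁻¹⁻¹ = s :=
  (inv_unique s⁻¹ s (inv_mul_inv s) (mul_inv_mul s)).symm

theorem inv_eq_self_of_mem_E {e : S} (he : e ∈ E S) : e⁻¹ = e := by
  have he : e * e = e := he
  exact (inv_unique e e (by rw [he, he]) (by rw [he, he])).symm

theorem mul_mem_E {e f : S} (he : e ∈ E S) (hf : f ∈ E S) : e * f ∈ E S := by
  have he : e * e = e := he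
  have hf : f * f = f := hf
  set x := (e * f)⁻¹ with hx
  have hxefx : x * (e * f) * x = x := inv_mul_inv (e * f)
  -- `f x e` is also an inverse of `e f`, hence equal to `x`
  have hfxe : f * x * e = x := by
    refine inv_unique (e * f) (f * x * e) ?_ ?_
    · calc e * f * (f * x * e) * (e * f) = e * (f * f) * x * (e * e) * f := by
            simp only [mul_assoc]
        _ = e * f * x * (e * f) := by rw [he, hf]; simp only [mul_assoc]
        _ = e * f := mul_inv_mul (e * f)
    · calc f * x * e * (e * f) * (f * x * e) = f * (x * (e * e) * (f * f) * x) * e := by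
            simp only [mul_assoc]
        _ = f * (x * (e * f) * x) * e := by rw [he, hf]; simp only [mul_assoc]
        _ = f * x * e := by rw [hxefx]
  have hxx : x * x = x := by
    calc x * x = f * x * e * (f * x * e) := by rw [hfxe]
      _ = f * (x * (e * f) * x) * e := by simp only [mul_assoc]
      _ = x := by rw [hxefx, hfxe]
  have hef : e * f = x := by
    rw [← InverseSemigroup.inv_inv (e * f), ← hx, inv_eq_self_of_mem_E hxx]
  show e * f * (e * f) = e * f
  rw [hef, hxx]

theorem mul_comm_of_mem_E {e f : S} (he : e ∈ E S) (hf : f ∈ E S) : e * f = f * e := by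
  have hef : e * f * (e * f) = e * f := mul_mem_E he hf
  have hfe : f * e * (f * e) = f * e := mul_mem_E hf he
  have he : e * e = e := he
  have hf : f * f = f := hf
  have hinv : f * e = (e * f)⁻¹ := by
    refine inv_unique (e * f) (f * e) ?_ ?_
    · calc e * f * (f * e) * (e * f) = e * (f * f) * (e * e) * f := by simp only [mul_assoc]
        _ = e * f := by rw [he, hf, mul_assoc _ e f, hef]
    · calc f * e * (e * f) * (f * e) = f * (e * e) * (f * f) * e := by simp only [mul_assoc]
        _ = f * e := by rw [he, hf, mul_assoc _ f e, hfe]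
  rw [hinv, inv_eq_self_of_mem_E hef]

theorem r_mem_E (s : S) : r s ∈ E S := by
  show s * s⁻¹ * (s * s⁻¹) = s * s⁻¹
  rw [← mul_assoc, mul_inv_mul]

theorem inv_mul_self_mem_E (s : S) : s⁻¹ * s ∈ E S := by
  show s⁻¹ * s * (s⁻¹ * s) = s⁻¹ * s
  rw [← mul_assoc, inv_mul_inv]

theorem r_eq_self_of_mem_E {e : S} (he : e ∈ E S) : r e = e := by
  rw [r, inv_eq_self_of_mem_E he]
  exact he

protected theorem mul_inv_rev (a b : S) : (a * b)⁻¹ = b⁻¹ * a⁻¹ := by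
  have hcomm := mul_comm_of_mem_E (r_mem_E b) (inv_mul_self_mem_E a)
  unfold r at hcomm
  refine (inv_unique (a * b) (b⁻¹ * a⁻¹) ?_ ?_).symm
  · calc a * b * (b⁻¹ * a⁻¹) * (a * b) = a * (b * b⁻¹ * (a⁻¹ * a)) * b := by
          simp only [mul_assoc]
      _ = a * a⁻¹ * a * (b * b⁻¹ * b) := by rw [hcomm]; simp only [mul_assoc]
      _ = a * b := by rw [mul_inv_mul, mul_inv_mul]
  · calc b⁻¹ * a⁻¹ * (a * b) * (b⁻¹ * a⁻¹) = b⁻¹ * (a⁻¹ * a * (b * b⁻¹)) * a⁻¹ := by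
          simp only [mul_assoc]
      _ = b⁻¹ * b * b⁻¹ * (a⁻¹ * a * a⁻¹) := by rw [← hcomm]; simp only [mul_assoc]
      _ = b⁻¹ * a⁻¹ := by rw [inv_mul_inv, inv_mul_inv]

theorem r_mul (a b : S) : r (a * b) = a * r b * a⁻¹ := by
  simp only [r, InverseSemigroup.mul_inv_rev, mul_assoc]

theorem inv_mul_r (s : S) : s⁻¹ * r s = s⁻¹ := by
  rw [r, ← mul_assoc, inv_mul_inv]

theorem r_mul_of_mul_r_eq {a b : S} (h : a * r b = a) : r (a * b) = r a := by
  rw [r_mul, h, r]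

theorem r_mul_mul_of_r_mul_eq {u s : S} (t : S) (h : r u * s = s) :
    r (t * u) * (t * s) = t * s := by
  calc r (t * u) * (t * s) = t * (r u * (t⁻¹ * t)) * s := by
        rw [r_mul]; simp only [mul_assoc]
    _ = t * t⁻¹ * t * (r u * s) := by
        rw [mul_comm_of_mem_E (r_mem_E u) (inv_mul_self_mem_E t)]; simp only [mul_assoc]
    _ = t * s := by rw [mul_inv_mul, h]

theorem r_mul_r_of_r_mul_eq {u s : S} (t : S) (h : r u * s = s) :
    r (t * u) * r (t * s) = r (t * s) := by
  show r (t * u) * (t * s * (t * s)⁻¹) = t * s * (t * s)⁻¹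
  rw [← mul_assoc, r_mul_mul_of_r_mul_eq t h]

theorem r_mul_foldl {α : Type*} (g : α → S) (l : List α) (a : S) :
    r a * l.foldl (fun acc q => acc * g q) a = l.foldl (fun acc q => acc * g q) a := by
  induction l generalizing a with
  | nil => exact mul_inv_mul a
  | cons q l ih =>
    have hr : r a * r (a * g q) = r (a * g q) := by
      rw [r, r, ← mul_assoc, ← mul_assoc, mul_inv_mul]
    rw [List.foldl_cons, ← ih, ← mul_assoc, hr]

theorem r_mul_of_comm (hcomm : ∀ a b : S, a * b = b * a) (a b : S) :
    r (a * b) = r a * r b := by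
  rw [r_mul, mul_assoc, hcomm (r b) a⁻¹, ← mul_assoc]
  rfl

theorem r_inv_of_comm (hcomm : ∀ a b : S, a * b = b * a) (a : S) : r a⁻¹ = r a := by
  rw [r, InverseSemigroup.inv_inv, hcomm, r]

end InverseSemigroup

theorem r_mul_wordVal {T : Type*} [InverseSemigroup T] (x : T) (l : List (T × Bool)) :
    r x * wordVal (x, true) l = wordVal (x, true) l :=
  r_mul_foldl letterVal l x

theorem r_mul_eq_of_r_eq_theta {T A : Type*} [InverseSemigroup T] [InverseSemigroup A]
    {θ : T → A} (hAcomm : ∀ a b : A, a * b = b * a)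
    (hθmul : ∀ e ∈ E T, ∀ f ∈ E T, θ (e * f) = θ e * θ f)
    {a b : A} {t u s : T} (ha : r a = θ (r (t * u))) (hb : r b = θ (r (t * s)))
    (hus : r u * s = s) : r (a * b) = θ (r (t * s)) := by
  rw [r_mul_of_comm hAcomm, ha, hb, ← hθmul _ (r_mem_E _) _ (r_mem_E _),
    r_mul_r_of_r_mul_eq t hus]

theorem xi_mem_component_general {T A : Type*} [InverseSemigroup T] [InverseSemigroup A]
    (θ : T → A)
    (hAcomm : ∀ a b : A, a * b = b * a)
    (hθE : ∀ e ∈ E T, θ e ∈ E A)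
    (hθmul : ∀ e ∈ E T, ∀ f ∈ E T, θ (e * f) = θ e * θ f)
    (c : T → T → T → A)
    (hc : ∀ x y z : T, c x y z * (c x y z)⁻¹ = θ (r (x * y * z)))
    (ξ : T → List (T × Bool) → A)
    (hξ1 : ∀ t x : T, ξ t [(x, true)] = θ (r (t * x)))
    (hξ2 : ∀ t x : T, ∀ u : List (T × Bool),
      ξ t ((x, false) :: u) = (c t x⁻¹ x)⁻¹ * ξ t ((x⁻¹, true) :: u))
    (hξ3 : ∀ t x y : T, ∀ v : List (T × Bool),
      ξ t ((x, true) :: (y, true) :: v) = c t x y * ξ t ((x * y, true) :: v))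
    (hξ4 : ∀ t x y : T, ∀ v : List (T × Bool),
      ξ t ((x, true) :: (y, false) :: v) =
        (c t (x * y⁻¹) y)⁻¹ * ξ t ((x * y⁻¹, true) :: v))
    : ∀ t : T, ∀ p : T × Bool, ∀ l : List (T × Bool),
      ξ t (p :: l) * (ξ t (p :: l))⁻¹ = θ (r (t * wordVal p l)) := by
  have step := @r_mul_eq_of_r_eq_theta T A _ _ θ hAcomm hθmul
  have hc_assoc (t x y : T) : r (c t x y) = θ (r (t * (x * y))) := by
    rw [← mul_assoc]
    exact hc t x y
  have hc_inv (t x y : T) : r (c t x y)⁻¹ = θ (r (t * (x * y))) := by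
    rw [r_inv_of_comm hAcomm, hc_assoc]
  have hpos (l : List (T × Bool)) :
      ∀ t x : T, r (ξ t ((x, true) :: l)) = θ (r (t * wordVal (x, true) l)) := by
    induction l with
    | nil =>
      intro t x
      rw [hξ1]
      exact r_eq_self_of_mem_E (hθE _ (r_mem_E _))
    | cons q v ih =>
      intro t x
      obtain ⟨y, _ | _⟩ := q
      · rw [hξ4]
        refine step (hc_inv t (x * y⁻¹) y) (ih t (x * y⁻¹)) ?_
        rw [r_mul_of_mul_r_eq (by rw [mul_assoc, inv_mul_r])]
        exact r_mul_wordVal _ v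
      · rw [hξ3]
        exact step (hc_assoc t x y) (ih t (x * y)) (r_mul_wordVal _ v)
  rintro t ⟨x, _ | _⟩ l
  · rw [hξ2]
    refine step (hc_inv t x⁻¹ x) (hpos l t x⁻¹) ?_
    rw [r_mul_of_mul_r_eq (inv_mul_r x)]
    exact r_mul_wordVal _ l
  · exact hpos l t x

/-- The auxiliary map `ξ_t` built from a strongly normalized 3-cocycle satisfies
`ξ_t(w) ∈ A_{θ(r(t φ(w)))}` for every nonempty word `w`. -/
theorem xi_mem_component {T A : Type*} [InverseSemigroup T] [InverseSemigroup A]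
    (θ : T → A) (η : T → A → A)
    (hAcomm : ∀ a b : A, a * b = b * a)
    (hθE : ∀ e ∈ E T, θ e ∈ E A)
    (hθinj : ∀ e ∈ E T, ∀ f ∈ E T, θ e = θ f → e = f)
    (hθsurj : ∀ a ∈ E A, ∃ e ∈ E T, θ e = a)
    (hθmul : ∀ e ∈ E T, ∀ f ∈ E T, θ (e * f) = θ e * θ f)
    (hηhom : ∀ t u : T, ∀ a : A, η (t * u) a = η t (η u a))
    (hηmul : ∀ t : T, ∀ a b : A, η t (a * b) = η t a * η t b)
    (hη1 : ∀ e ∈ E T, ∀ a : A, η e a = θ e * a)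
    (hη2 : ∀ t : T, ∀ e ∈ E T, η t (θ e) = θ (t * e * t⁻¹))
    (c : T → T → T → A)
    (hc : ∀ x y z : T, c x y z * (c x y z)⁻¹ = θ (r (x * y * z)))
    (hcoc : ∀ x y z w : T,
      η x (c y z w) * c x y z * c x (y * z) w = c x y (z * w) * c (x * y) z w)
    (hop : ∀ x x' y y' z z' : T, nle x x' → nle y y' → nle z z' →
      nle (c x y z) (c x' y' z'))
    (hsn : ∀ x y z : T, (x ∈ E T ∨ y ∈ E T ∨ z ∈ E T) →
      c x y z = θ (r (x * y * z)))
    (ξ : T → List (T × Bool) → A)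
    (hξ1 : ∀ t x : T, ξ t [(x, true)] = θ (r (t * x)))
    (hξ2 : ∀ t x : T, ∀ u : List (T × Bool),
      ξ t ((x, false) :: u) = (c t x⁻¹ x)⁻¹ * ξ t ((x⁻¹, true) :: u))
    (hξ3 : ∀ t x y : T, ∀ v : List (T × Bool),
      ξ t ((x, true) :: (y, true) :: v) = c t x y * ξ t ((x * y, true) :: v))
    (hξ4 : ∀ t x y : T, ∀ v : List (T × Bool),
      ξ t ((x, true) :: (y, false) :: v) =
        (c t (x * y⁻¹) y)⁻¹ * ξ t ((x * y⁻¹, true) :: v))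
    : ∀ t : T, ∀ p : T × Bool, ∀ l : List (T × Bool),
      ξ t (p :: l) * (ξ t (p :: l))⁻¹ = θ (r (t * wordVal p l)) :=
  xi_mem_component_general θ hAcomm hθE hθmul c hc ξ hξ1 hξ2 hξ3 hξ4
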